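/- Let q = 2^s and consider S = F_q[y_1,y_2,x_2,x_1] with ξ_i = Σ_{j=1}^2 (x_j y_j^{q^i} + y_j x_j^{q^i}). Then u_2 = ξ_3 ξ_1^q + ξ_2^{q+1} + ξ_1^{q^2+1}, where u_2 is the Moore-type determinant det(v_j^{q^{i-1}})_{1≤i,j≤4} in the variables x_1, x_2, y_2, y_1 (equivalently the orbit product Π N(y_i)N(x_i) over the unipotent upper triangular subgroup). -/

import Mathlib

/-!
In characteristic 2 the determinant of a 4×4 matrix `M` is the Pfaffian of the alternating Gram
matrix `M J Mᵀ`, where `J` is the symplectic form pairing `x₁ ↔ y₁` and `x₂ ↔ y₂`. For the Moore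
matrix with rows `v, v^q, v^{q²}, v^{q³}` the Gram entries are Frobenius twists of the `ξ_i`:
`ω(v^{q^a}, v^{q^{a+i}}) = ξ_i^{q^a}`, and the Pfaffian becomes `ξ₃ ξ₁^q + ξ₂ ξ₂^q + ξ₁ ξ₁^{q²}`.
-/

open MvPolynomial

/-- `ξ_i = Σ_j (x_j y_j^{q^i} + y_j x_j^{q^i})` in `S = F_q[y_1,y_2,x_2,x_1]`
(`inl j` is `y_j`, `inr j` is `x_j`). -/
noncomputable def xiGen (q : ℕ) (F : Type*) [Field F] (i : ℕ) :
    MvPolynomial (Fin 2 ⊕ Fin 2) F :=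
  ∑ j : Fin 2, (X (Sum.inr j) * X (Sum.inl j) ^ q ^ i
    + X (Sum.inl j) * X (Sum.inr j) ^ q ^ i)

/-- The Moore-type determinant `u_2 = det (v_j^{q^{i-1}})` in the variables
`x_1, x_2, y_2, y_1`. -/
noncomputable def uTwo (q : ℕ) (F : Type*) [Field F] : MvPolynomial (Fin 2 ⊕ Fin 2) F :=
  (Matrix.of fun i j : Fin 4 =>
    (![X (Sum.inr 0), X (Sum.inr 1), X (Sum.inl 1), X (Sum.inl 0)] j :
      MvPolynomial (Fin 2 ⊕ Fin 2) F) ^ q ^ (i : ℕ)).det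

section SymplecticForm

variable {R : Type*} [CommRing R]

/-- In the coordinate order `(x₁, x₂, y₂, y₁)` this is the standard symplectic form. -/
def sympForm (v w : Fin 4 → R) : R := v 0 * w 3 + v 3 * w 0 + v 1 * w 2 + v 2 * w 1

theorem det_fin_four_eq_sympForm [CharP R 2] (M : Matrix (Fin 4) (Fin 4) R) :
    M.det = sympForm (M 0) (M 3) * sympForm (M 1) (M 2)
      + sympForm (M 0) (M 2) * sympForm (M 1) (M 3)
      + sympForm (M 0) (M 1) * sympForm (M 2) (M 3) := by
  rw [Matrix.det_succ_row_zero]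
  simp only [Nat.succ_eq_add_one, Nat.reduceAdd, Fin.isValue, Matrix.det_fin_three,
    Matrix.submatrix_apply, Fin.succ_zero_eq_one, Fin.succAbove, Fin.castSucc_zero,
    Fin.succ_one_eq_two, Fin.castSucc_one, Fin.reduceSucc, Fin.reduceCastSucc, Fin.sum_univ_succ,
    Fin.coe_ofNat_eq_mod, Nat.zero_mod, pow_zero, one_mul, lt_self_iff_false, ↓reduceIte,
    not_lt_zero, Fin.val_succ, Fin.succ_pos, zero_add, pow_one, neg_mul, Fin.lt_one_iff,
    Fin.reduceEq, even_two, Even.neg_pow, one_pow, Fin.reduceLT, Finset.univ_unique,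
    Fin.default_eq_zero, Fin.val_eq_zero, Finset.sum_singleton, sympForm]
  rw [← sub_eq_zero]
  ring_nf
  simp only [CharTwo.two_eq_zero, mul_zero, neg_zero, sub_self]

theorem sympForm_pow_expChar_pow (p n : ℕ) [ExpChar R p] (v w : Fin 4 → R) :
    sympForm (v ^ p ^ n) (w ^ p ^ n) = sympForm v w ^ p ^ n := by
  simp only [sympForm, Pi.pow_apply, add_pow_expChar_pow, mul_pow]

theorem sympForm_pow_pow_add (p s a i : ℕ) [ExpChar R p] (v : Fin 4 → R) :
    sympForm (v ^ (p ^ s) ^ a) (v ^ (p ^ s) ^ (a + i))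
      = sympForm v (v ^ (p ^ s) ^ i) ^ (p ^ s) ^ a := by
  rw [show (p ^ s) ^ (a + i) = (p ^ s) ^ i * p ^ (s * a) by ring, pow_mul v, ← pow_mul p s a,
    sympForm_pow_expChar_pow]

theorem det_moore_fin_four [CharP R 2] (s : ℕ) (v : Fin 4 → R) :
    (Matrix.of fun i j : Fin 4 => v j ^ (2 ^ s) ^ (i : ℕ)).det
      = sympForm v (v ^ (2 ^ s) ^ 3) * sympForm v (v ^ 2 ^ s) ^ 2 ^ s
        + sympForm v (v ^ (2 ^ s) ^ 2) ^ (2 ^ s + 1)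
        + sympForm v (v ^ 2 ^ s) ^ ((2 ^ s) ^ 2 + 1) := by
  rw [det_fin_four_eq_sympForm]
  change sympForm (v ^ (2 ^ s) ^ 0) (v ^ (2 ^ s) ^ (0 + 3))
        * sympForm (v ^ (2 ^ s) ^ 1) (v ^ (2 ^ s) ^ (1 + 1))
      + sympForm (v ^ (2 ^ s) ^ 0) (v ^ (2 ^ s) ^ (0 + 2))
        * sympForm (v ^ (2 ^ s) ^ 1) (v ^ (2 ^ s) ^ (1 + 2))
      + sympForm (v ^ (2 ^ s) ^ 0) (v ^ (2 ^ s) ^ (0 + 1))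
        * sympForm (v ^ (2 ^ s) ^ 2) (v ^ (2 ^ s) ^ (2 + 1)) = _
  simp only [sympForm_pow_pow_add]
  ring_nf

end SymplecticForm

theorem xiGen_eq_sympForm (q : ℕ) (F : Type*) [Field F] (i : ℕ) :
    xiGen q F i = sympForm ![X (Sum.inr 0), X (Sum.inr 1), X (Sum.inl 1), X (Sum.inl 0)]
      (![X (Sum.inr 0), X (Sum.inr 1), X (Sum.inl 1), X (Sum.inl 0)] ^ q ^ i) := by
  simp only [xiGen, sympForm, Fin.sum_univ_two, Pi.pow_apply, Matrix.cons_val,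
    Fin.isValue]
  ring

theorem stmt_7_general {F : Type*} [Field F] [Fintype F] (s q : ℕ)
    (hq : q = 2 ^ s) (hF : Fintype.card F = q) :
    uTwo q F = xiGen q F 3 * xiGen q F 1 ^ q + xiGen q F 2 ^ (q + 1)
      + xiGen q F 1 ^ (q ^ 2 + 1) := by
  subst hq
  have : CharP F 2 := charP_of_card_eq_prime_pow hF
  simp only [xiGen_eq_sympForm, pow_one]
  exact det_moore_fin_four s _

/-- `u_2 = ξ_3 ξ_1^q + ξ_2^{q+1} + ξ_1^{q^2+1}`. -/
theorem stmt_7 {F : Type*} [Field F] [Fintype F] (s q : ℕ) (hs : 1 ≤ s)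
    (hq : q = 2 ^ s) (hF : Fintype.card F = q) :
    uTwo q F = xiGen q F 3 * xiGen q F 1 ^ q + xiGen q F 2 ^ (q + 1)
      + xiGen q F 1 ^ (q ^ 2 + 1) :=
  stmt_7_general s q hq hF
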